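/- arXiv:1607.04546 — 3 statements merged into one kernel-verified Lean document; each statement's English description precedes it below -/
import Mathlib

section
/- If {P_1, …, P_n} is an (n,l,m)-fusion frame over 𝔽 with 0 < l < m, n = 2·d_𝔽(m), n > d_𝔽(m)+1, and max_{j≠k} tr(P_j P_k) = l²/m (i.e., it is a maximal orthoplectic fusion frame), then m = 2l. -/
/-!
Centre each projection: `Q j = P j - (l/m) • 1` is a traceless Hermitian matrix. For the real
inner product `⟪A, B⟫ = re tr (A B)` on the `d_𝔽(m)`-dimensional space of such matrices,
`⟪Q j, Q k⟫ = re tr (P j * P k) - l²/m ≤ 0` for `j ≠ k`, while `⟪Q j, Q j⟫ = l - l²/m > 0`.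

Nonzero vectors with pairwise non-positive inner products, no two of them negatively
proportional, number at most `3/2` times the dimension of their span: a minimal positive linear
relation among them involves at least three vectors, is orthogonal to all the others, and its
vectors span a space of dimension one less than their number. As `n = 2 d_𝔽(m)` is too many,
some `Q k = -Q j`, that is `P k = (2l/m) • 1 - P j`; since both are idempotent and `P j` is not
scalar, `2l/m = 1`.
-/

open Matrix

noncomputable section

variable {𝕜 : Type*} [RCLike 𝕜]

/-- An `(n,l,m)`-fusion frame: a family of rank-`l` orthogonal projections on `𝕜^m`
satisfying the frame inequality. -/
def IsFusionFrame {ι : Type*} [Fintype ι] {m : ℕ} (l : ℕ)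
    (P : ι → Matrix (Fin m) (Fin m) 𝕜) : Prop :=
  (∀ j, (P j).IsHermitian) ∧ (∀ j, P j * P j = P j) ∧ (∀ j, (P j).rank = l) ∧
  ∃ A B : ℝ, 0 < A ∧ A ≤ B ∧ ∀ x : Fin m → 𝕜,
    A * ∑ i, ‖x i‖ ^ 2 ≤ ∑ j, ∑ i, ‖(P j).mulVec x i‖ ^ 2 ∧
    ∑ j, ∑ i, ‖(P j).mulVec x i‖ ^ 2 ≤ B * ∑ i, ‖x i‖ ^ 2

open scoped Classical in
/-- `d_𝔽(m)`: `(m+2)(m-1)/2` in the real case, `m² - 1` in the complex case. -/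
noncomputable def dF (𝕜 : Type*) [RCLike 𝕜] (m : ℕ) : ℕ :=
  if (RCLike.I : 𝕜) = 0 then (m + 2) * (m - 1) / 2 else m ^ 2 - 1

open Finset Function Module Submodule
open scoped RealInnerProductSpace

section ObtuseFamily

variable {E : Type*} [NormedAddCommGroup E] [InnerProductSpace ℝ E]

def PosDependent (J : Finset E) : Prop :=
  J.Nonempty ∧ ∃ d : E → ℝ, (∀ v ∈ J, 0 < d v) ∧ ∑ v ∈ J, d v • v = 0

lemma eq_neg_one_of_eq_smul {v w : E} (hv : ⟪v, v⟫ ≠ 0) (hw : ⟪w, w⟫ = ⟪v, v⟫) {c : ℝ}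
    (hc : c < 0) (h : w = c • v) : c = -1 := by
  rw [h, real_inner_smul_left, real_inner_smul_right, ← mul_assoc] at hw
  have hcc : c * c = 1 := mul_right_cancel₀ hv (by rw [hw, one_mul])
  nlinarith

variable {S T J : Finset E}

lemma sum_filter_pos_smul_eq_zero (hT : (T : Set E).Pairwise fun v w => ⟪v, w⟫ ≤ 0)
    {g : E → ℝ} (hg : ∑ v ∈ T, g v • v = 0) : ∑ v ∈ T with 0 < g v, g v • v = 0 := by
  set u := ∑ v ∈ T with 0 < g v, g v • v
  set u' := ∑ v ∈ T with ¬ 0 < g v, g v • v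
  have hu' : u' = -u := eq_neg_of_add_eq_zero_right (by rw [sum_filter_add_sum_filter_not, hg])
  -- `u` and `u'` are opposite, yet every term of `⟪u, u'⟫` is nonnegative
  have hinner : 0 ≤ ⟪u, u'⟫ := by
    simp only [u, u', sum_inner, inner_sum, real_inner_smul_left, real_inner_smul_right]
    refine sum_nonneg fun w hw => sum_nonneg fun v hv => ?_
    rw [mem_filter] at hv hw
    have hvw : v ≠ w := by rintro rfl; exact hw.2 hv.2
    exact mul_nonneg_of_nonpos_of_nonpos (not_lt.mp hw.2)
      (mul_nonpos_of_nonneg_of_nonpos hv.2.le (hT hv.1 hw.1 hvw))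
  rw [hu', inner_neg_right, neg_nonneg] at hinner
  exact real_inner_self_nonpos.mp hinner

lemma exists_posDependent_of_not_linearIndepOn
    (hT : (T : Set E).Pairwise fun v w => ⟪v, w⟫ ≤ 0) (h : ¬ LinearIndepOn ℝ id (T : Set E)) :
    ∃ J ⊆ T, PosDependent J := by
  obtain ⟨g, hg, i, hi, hgi⟩ := not_linearIndepOn_finset_iff.mp h
  wlog hpos : 0 < g i generalizing g
  · refine this (-g) (by simpa using hg) (by simpa using hgi) ?_
    simpa using lt_of_le_of_ne (not_lt.mp hpos) hgi
  exact ⟨_, filter_subset _ T, ⟨i, mem_filter.mpr ⟨hi, hpos⟩⟩, g,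
    fun v hv => (mem_filter.mp hv).2, sum_filter_pos_smul_eq_zero hT hg⟩

namespace PosDependent

lemma inner_eq_zero (hS : (S : Set E).Pairwise fun v w => ⟪v, w⟫ ≤ 0) (hJS : J ⊆ S)
    (hJ : PosDependent J) {x : E} (hx : x ∈ S) (hxJ : x ∉ J) {j : E} (hj : j ∈ J) :
    ⟪x, j⟫ = 0 := by
  obtain ⟨-, d, hd, hsum⟩ := hJ
  have hterm : ∀ v ∈ J, d v * ⟪x, v⟫ ≤ 0 := fun v hv =>
    mul_nonpos_of_nonneg_of_nonpos (hd v hv).le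
      (hS hx (hJS hv) (by rintro rfl; exact hxJ hv))
  have hzero : ∑ v ∈ J, d v * ⟪x, v⟫ = 0 := by
    simpa [inner_sum, real_inner_smul_right] using congrArg (⟪x, ·⟫) hsum
  have := (sum_eq_zero_iff_of_nonpos hterm).mp hzero j hj
  exact (mul_eq_zero.mp this).resolve_left (hd j hj).ne'

lemma finrank_span_eq_add [DecidableEq E] (hS : (S : Set E).Pairwise fun v w => ⟪v, w⟫ ≤ 0)
    (hJS : J ⊆ S) (hJ : PosDependent J) :
    finrank ℝ (span ℝ (S : Set E)) =
      finrank ℝ (span ℝ (J : Set E)) + finrank ℝ (span ℝ ((S \ J : Finset E) : Set E)) := by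
  have hortho : span ℝ (J : Set E) ⟂ span ℝ ((S \ J : Finset E) : Set E) := by
    refine (isOrtho_span.mpr fun u hu v hv => ?_)
    obtain ⟨hvS, hvJ⟩ := mem_sdiff.mp hv
    rw [real_inner_comm]
    exact hJ.inner_eq_zero hS hJS hvS hvJ hu
  have hsup : span ℝ (S : Set E) = span ℝ (J : Set E) ⊔ span ℝ ((S \ J : Finset E) : Set E) := by
    rw [← span_union, ← coe_union, union_sdiff_of_subset hJS]
  rw [hsup, ← finrank_sup_add_finrank_inf_eq, disjoint_iff.mp hortho.disjoint, finrank_bot,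
    add_zero]

lemma three_le_card (h0 : ∀ v ∈ J, v ≠ 0)
    (hanti : (J : Set E).Pairwise fun v w => ∀ c : ℝ, c < 0 → w ≠ c • v) (hJ : PosDependent J) :
    3 ≤ J.card := by
  classical
  obtain ⟨hne, d, hd, hsum⟩ := hJ
  by_contra! hlt
  interval_cases h : J.card
  · simp_all
  · obtain ⟨v, rfl⟩ := card_eq_one.mp h
    simp only [sum_singleton, smul_eq_zero] at hsum
    exact hsum.elim (hd v (mem_singleton_self v)).ne' (h0 v (mem_singleton_self v))
  · obtain ⟨v, w, hvw, rfl⟩ := card_eq_two.mp h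
    have hv : v ∈ ({v, w} : Finset E) := by simp
    have hw : w ∈ ({v, w} : Finset E) := by simp
    rw [sum_pair hvw] at hsum
    refine hanti hv hw hvw (-(d v) / d w) (div_neg_of_neg_of_pos (neg_neg_of_pos (hd v hv))
      (hd w hw)) ?_
    rw [div_eq_inv_mul, mul_smul, neg_smul, ← eq_neg_of_add_eq_zero_right hsum,
      inv_smul_smul₀ (hd w hw).ne']

lemma card_le_finrank_span_add_one (hJ : PosDependent J)
    (hJo : (J : Set E).Pairwise fun v w => ⟪v, w⟫ ≤ 0) (hmin : ∀ J' ⊂ J, ¬ PosDependent J') :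
    J.card ≤ finrank ℝ (span ℝ (J : Set E)) + 1 := by
  classical
  obtain ⟨v, hv⟩ := hJ.1
  have hind : LinearIndepOn ℝ id ((J.erase v : Finset E) : Set E) := by
    by_contra h
    obtain ⟨J', hJ'v, hJ'⟩ := exists_posDependent_of_not_linearIndepOn
      (hJo.mono (coe_subset.mpr (erase_subset v J))) h
    exact hmin J' (hJ'v.trans_ssubset (erase_ssubset hv)) hJ'
  have hle : finrank ℝ (span ℝ ((J.erase v : Finset E) : Set E)) ≤
      finrank ℝ (span ℝ (J : Set E)) :=
    finrank_mono (span_mono (coe_subset.mpr (erase_subset v J)))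
  rw [finrank_span_finset_eq_card hind, card_erase_of_mem hv] at hle
  omega

end PosDependent

theorem two_mul_card_le_three_mul_finrank_span (S : Finset E) (h0 : ∀ v ∈ S, v ≠ 0)
    (hS : (S : Set E).Pairwise fun v w => ⟪v, w⟫ ≤ 0)
    (hanti : (S : Set E).Pairwise fun v w => ∀ c : ℝ, c < 0 → w ≠ c • v) :
    2 * S.card ≤ 3 * finrank ℝ (span ℝ (S : Set E)) := by
  classical
  induction S using Finset.strongInduction with
  | H S ih =>
  by_cases hind : LinearIndepOn ℝ id (S : Set E)
  · rw [finrank_span_finset_eq_card hind]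
    omega
  -- split off a positively dependent subfamily of minimal size
  obtain ⟨J₀, hJ₀S, hJ₀⟩ := exists_posDependent_of_not_linearIndepOn hS hind
  obtain ⟨J, hJmem, hJmin⟩ := exists_min_image (S.powerset.filter PosDependent) card
    ⟨J₀, mem_filter.mpr ⟨mem_powerset.mpr hJ₀S, hJ₀⟩⟩
  obtain ⟨hJS, hJ⟩ := mem_filter.mp hJmem
  replace hJS := mem_powerset.mp hJS
  have hJS' : (J : Set E) ⊆ S := coe_subset.mpr hJS
  have hJ3 := hJ.three_le_card (fun v hv => h0 v (hJS hv)) (hanti.mono hJS')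
  have hJrank := hJ.card_le_finrank_span_add_one (hS.mono hJS') fun J' hJ'J hJ' =>
    (card_lt_card hJ'J).not_ge
      (hJmin J' (mem_filter.mpr ⟨mem_powerset.mpr (hJ'J.subset.trans hJS), hJ'⟩))
  have hSJ : ((S \ J : Finset E) : Set E) ⊆ S := coe_subset.mpr sdiff_subset
  have hrest := ih (S \ J) (sdiff_ssubset hJS hJ.1) (fun v hv => h0 v (mem_sdiff.mp hv).1)
    (hS.mono hSJ) (hanti.mono hSJ)
  have hcard := card_sdiff_add_card_eq_card hJS
  rw [hJ.finrank_span_eq_add hS hJS]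
  omega

theorem two_mul_card_le_three_mul_finrank_span_range {ι : Type*} [Fintype ι] (v : ι → E)
    (h0 : ∀ i, v i ≠ 0) (hv : Pairwise fun i j => ⟪v i, v j⟫ ≤ 0)
    (hanti : Pairwise fun i j => ∀ c : ℝ, c < 0 → v j ≠ c • v i) :
    2 * Fintype.card ι ≤ 3 * finrank ℝ (span ℝ (Set.range v)) := by
  classical
  have hinj : Injective v := fun i j hij => by
    by_contra hne
    have hii : ⟪v i, v j⟫ ≤ 0 := hv hne
    rw [← hij] at hii
    exact h0 i (real_inner_self_nonpos.mp hii)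
  have hpair {r : E → E → Prop} (hr : Pairwise (r on v)) :
      ((univ.image v : Finset E) : Set E).Pairwise r := by
    rw [coe_image, coe_univ, hinj.injOn.pairwise_image, Set.pairwise_univ]
    exact hr
  have := two_mul_card_le_three_mul_finrank_span (univ.image v) (by simp [h0]) (hpair hv)
    (hpair hanti)
  rwa [card_image_of_injective _ hinj, card_univ, coe_image, coe_univ, Set.image_univ] at this

end ObtuseFamily

lemma Matrix.trace_eq_rank_of_isIdempotentElem {K n : Type*} [Field K] [Fintype n]
    [DecidableEq n] {A : Matrix n n K} (hA : IsIdempotentElem A) : A.trace = A.rank := by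
  have hA' : IsIdempotentElem (toLin' A) := hA.map (toLinAlgEquiv' (R := K) (n := n))
  rw [← trace_toLin'_eq, (LinearMap.IsIdempotentElem.isProj_range _ hA').trace]
  rfl

lemma IsIdempotentElem.eq_one_of_smul_one_sub {K A : Type*} [Field K] [NeZero (2 : K)] [Ring A]
    [Algebra K A] [Nontrivial A] {p : A} {c : K} (hp : IsIdempotentElem p)
    (hq : IsIdempotentElem (c • 1 - p)) (h0 : p ≠ 0) (h1 : p ≠ 1) : c = 1 := by
  by_contra hc
  have h2c : (2 * c - 2 : K) ≠ 0 := by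
    rw [← mul_sub_one]
    exact mul_ne_zero two_ne_zero (sub_ne_zero.mpr hc)
  have hexp : (c * c - c) • (1 : A) = (2 * c - 2) • p := by
    have := hq.eq
    simp only [sub_mul, mul_sub, smul_mul_assoc, mul_smul_comm, one_mul, mul_one, hp.eq] at this
    linear_combination (norm := module) this
  have hpc : p = (c / 2) • 1 := by
    rw [← inv_smul_smul₀ h2c p, ← hexp, smul_smul]
    congr 1
    field_simp
  have hsq : IsIdempotentElem (c / 2) := by
    have := hp.eq
    rw [hpc, smul_mul_smul, one_mul] at this
    exact smul_left_injective K one_ne_zero this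
  rcases IsIdempotentElem.iff_eq_zero_or_one.mp hsq with h | h
  · exact h0 (by rw [hpc, h, zero_smul])
  · exact h1 (by rw [hpc, h, one_smul])

section RealCoords

variable {ι κ : Type*}

def realCoords : Matrix ι κ 𝕜 →ₗ[ℝ] EuclideanSpace ℝ (ι × κ × Bool) where
  toFun M := WithLp.toLp 2 fun p =>
    if p.2.2 then RCLike.im (M p.1 p.2.1) else RCLike.re (M p.1 p.2.1)
  map_add' M N := by ext ⟨i, j, b⟩; cases b <;> simp
  map_smul' c M := by ext ⟨i, j, b⟩; cases b <;> simp [RCLike.smul_re, RCLike.smul_im]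

lemma realCoords_injective : Injective (realCoords : Matrix ι κ 𝕜 → _) := by
  intro M N h
  ext i j
  apply RCLike.ext
  · simpa [realCoords] using congrArg (fun x => x (i, j, false)) h
  · simpa [realCoords] using congrArg (fun x => x (i, j, true)) h

lemma inner_realCoords [Fintype ι] [Fintype κ] (M N : Matrix ι κ 𝕜) :
    ⟪realCoords M, realCoords N⟫ = RCLike.re (Mᴴ * N).trace := by
  simp only [realCoords, LinearMap.coe_mk, AddHom.coe_mk, PiLp.inner_apply, RCLike.inner_apply,
    conj_trivial, Fintype.sum_prod_type, Fintype.sum_bool, if_true, Bool.false_eq_true, if_false,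
    trace, Matrix.diag, mul_apply, conjTranspose_apply, map_sum, RCLike.star_def, RCLike.mul_re,
    RCLike.conj_re, RCLike.conj_im]
  rw [Finset.sum_comm]
  exact sum_congr rfl fun j _ => sum_congr rfl fun i _ => by ring

end RealCoords

section SelfAdjoint

variable {n : Type*} [Fintype n]

lemma finrank_selfAdjoint_matrix_le_card_sym2 [DecidableEq n] (hI : (RCLike.I : 𝕜) = 0) :
    finrank ℝ (selfAdjoint.submodule ℝ (Matrix n n 𝕜)) ≤ Fintype.card (Sym2 n) := by
  let φ : Matrix n n 𝕜 →ₗ[ℝ] Sym2 n → ℝ :=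
    { toFun M := Sym2.lift
        ⟨fun i j => RCLike.re (M i j + M j i), fun i j => by dsimp only; rw [add_comm]⟩
      map_add' M N := by
        ext s; induction s using Sym2.ind
        simp only [Matrix.add_apply, map_add, Sym2.lift_mk, Pi.add_apply]; ring
      map_smul' c M := by
        ext s; induction s using Sym2.ind
        simp only [Matrix.smul_apply, map_add, RCLike.smul_re, Sym2.lift_mk, Pi.smul_apply,
          smul_eq_mul, RingHom.id_apply]
        ring }
  rw [← finrank_fintype_fun_eq_card ℝ]
  refine LinearMap.finrank_le_finrank_of_injective (f := φ ∘ₗ Submodule.subtype _) ?_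
  rw [← LinearMap.ker_eq_bot, LinearMap.ker_eq_bot']
  rintro ⟨M, hM⟩ hφ
  rw [Submodule.mk_eq_zero]
  ext i j
  have hij : RCLike.re (M i j) + RCLike.re (M j i) = 0 := by
    simpa [φ] using congrFun hφ s(i, j)
  have hre : RCLike.re (M j i) = RCLike.re (M i j) := by
    rw [← (show M.IsHermitian from hM).apply i j, RCLike.star_def, RCLike.conj_re]
  apply RCLike.ext
  · simp only [Matrix.zero_apply, map_zero]
    linarith
  · simp [RCLike.im_eq_zero hI]

lemma finrank_selfAdjoint_matrix_le_card_sq [LinearOrder n] :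
    finrank ℝ (selfAdjoint.submodule ℝ (Matrix n n 𝕜)) ≤ Fintype.card n ^ 2 := by
  -- a Hermitian matrix is determined by the real parts of its upper triangle and the imaginary
  -- parts of its strict upper triangle, which are stored below the diagonal
  let ψ : Matrix n n 𝕜 →ₗ[ℝ] n × n → ℝ :=
    { toFun M p := if p.1 ≤ p.2 then RCLike.re (M p.1 p.2) else RCLike.im (M p.2 p.1)
      map_add' M N := by ext p; by_cases h : p.1 ≤ p.2 <;> simp [h]
      map_smul' c M := by
        ext p; by_cases h : p.1 ≤ p.2 <;> simp [h, RCLike.smul_re, RCLike.smul_im] }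
  rw [sq, ← Fintype.card_prod, ← finrank_fintype_fun_eq_card ℝ]
  refine LinearMap.finrank_le_finrank_of_injective (f := ψ ∘ₗ Submodule.subtype _) ?_
  rw [← LinearMap.ker_eq_bot, LinearMap.ker_eq_bot']
  rintro ⟨M, hM⟩ hψ
  replace hM : M.IsHermitian := hM
  rw [Submodule.mk_eq_zero]
  have hψ' (i j : n) : (if i ≤ j then RCLike.re (M i j) else RCLike.im (M j i)) = 0 :=
    congrFun hψ (i, j)
  have hupper : ∀ i j, i ≤ j → M i j = 0 := by
    intro i j hij
    apply RCLike.ext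
    · simpa [hij] using hψ' i j
    · rcases hij.lt_or_eq with hlt | rfl
      · simpa [not_le.mpr hlt] using hψ' j i
      · simpa using (RCLike.conj_eq_iff_im.mp (hM.apply i i))
  ext i j
  rcases le_total i j with hij | hji
  · exact hupper i j hij
  · rw [← hM.apply i j, hupper j i hji, star_zero]; rfl

variable (𝕜 n) in
def tracelessSelfAdjoint : Submodule ℝ (Matrix n n 𝕜) :=
  selfAdjoint.submodule ℝ (Matrix n n 𝕜) ⊓ LinearMap.ker (traceLinearMap n ℝ 𝕜)

lemma finrank_tracelessSelfAdjoint_lt [DecidableEq n] [Nonempty n] :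
    finrank ℝ (tracelessSelfAdjoint 𝕜 n) <
      finrank ℝ (selfAdjoint.submodule ℝ (Matrix n n 𝕜)) := by
  refine finrank_lt_finrank_of_lt (inf_lt_left.mpr fun h => ?_)
  have h1 := h (show (1 : Matrix n n 𝕜) ∈ selfAdjoint.submodule ℝ _ from IsSelfAdjoint.one _)
  simp [Fintype.card_ne_zero] at h1

lemma finrank_tracelessSelfAdjoint_le_dF {m : ℕ} (hm : 0 < m) :
    finrank ℝ (tracelessSelfAdjoint 𝕜 (Fin m)) ≤ dF 𝕜 m := by
  obtain ⟨k, rfl⟩ : ∃ k, m = k + 1 := ⟨m - 1, by omega⟩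
  have hlt := finrank_tracelessSelfAdjoint_lt (𝕜 := 𝕜) (n := Fin (k + 1))
  unfold dF
  split_ifs with hI
  · have hle := finrank_selfAdjoint_matrix_le_card_sym2 (n := Fin (k + 1)) hI
    rw [Sym2.card, Fintype.card_fin, Nat.choose_two_right, Nat.add_sub_cancel,
      show (k + 1 + 1) * (k + 1) = (k + 1 + 2) * k + 2 by ring] at hle
    rw [Nat.add_sub_cancel]
    omega
  · have hle := finrank_selfAdjoint_matrix_le_card_sq (𝕜 := 𝕜) (n := Fin (k + 1))
    rw [Fintype.card_fin] at hle
    omega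

end SelfAdjoint

lemma trace_sub_div_smul_one_mul_sub_div_smul_one {R : Type*} [Field R] {m : ℕ}
    {A B : Matrix (Fin m) (Fin m) R} {t : R} (hA : A.trace = t) (hB : B.trace = t) :
    ((A - (t / m) • 1) * (B - (t / m) • 1)).trace = (A * B).trace - t ^ 2 / m := by
  simp only [sub_mul, mul_sub, smul_mul_assoc, mul_smul_comm, one_mul, mul_one,
    trace_sub, trace_smul, trace_one, hA, hB, Fintype.card_fin, smul_eq_mul]
  rcases eq_or_ne (m : R) 0 with hm | hm
  · simp [hm]
  · field_simp
    ring

lemma trace_sub_div_smul_one {R : Type*} [Field R] [CharZero R] {m : ℕ}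
    {A : Matrix (Fin m) (Fin m) R} {t : R} (hA : A.trace = t) : (A - (t / m) • 1).trace = 0 := by
  rcases eq_or_ne m 0 with rfl | hm
  · simp
  · simp only [trace_sub, trace_smul, trace_one, hA, Fintype.card_fin, smul_eq_mul]
    field_simp
    ring

lemma sub_div_smul_one_mem_tracelessSelfAdjoint {m l : ℕ} {P : Matrix (Fin m) (Fin m) 𝕜}
    (hP : P.IsHermitian) (htr : P.trace = l) :
    P - ((l : 𝕜) / m) • 1 ∈ tracelessSelfAdjoint 𝕜 (Fin m) := by
  refine ⟨hP.sub ?_, trace_sub_div_smul_one htr⟩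
  simp [IsHermitian, conjTranspose_smul]

lemma inner_realCoords_sub_div_smul_one {m l : ℕ} {P P' : Matrix (Fin m) (Fin m) 𝕜}
    (hP : P.IsHermitian) (htr : P.trace = l) (htr' : P'.trace = l) :
    ⟪realCoords (P - ((l : 𝕜) / m) • 1), realCoords (P' - ((l : 𝕜) / m) • 1)⟫ =
      RCLike.re (P * P').trace - (l : ℝ) ^ 2 / m := by
  rw [inner_realCoords, IsHermitian.eq (sub_div_smul_one_mem_tracelessSelfAdjoint hP htr).1,
    trace_sub_div_smul_one_mul_sub_div_smul_one htr htr', map_sub, ← RCLike.ofReal_natCast m,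
    RCLike.div_re_ofReal, ← Nat.cast_pow, RCLike.natCast_re, Nat.cast_pow]

lemma eq_two_mul_of_sub_div_smul_one_eq_neg {K : Type*} [Field K] [CharZero K] {m l : ℕ}
    (hl : 0 < l) (hlm : l < m) {P P' : Matrix (Fin m) (Fin m) K} (hP : IsIdempotentElem P)
    (hP' : IsIdempotentElem P') (htr : P.trace = l)
    (h : P' - ((l : K) / m) • 1 = -(P - ((l : K) / m) • 1)) : m = 2 * l := by
  have : NeZero m := ⟨by omega⟩
  have hP'P : P' = ((2 * l : K) / m) • 1 - P := by
    linear_combination (norm := module) h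
  have h0 : P ≠ 0 := by
    rintro rfl
    rw [trace_zero, eq_comm, Nat.cast_eq_zero] at htr
    omega
  have h1 : P ≠ 1 := by
    rintro rfl
    rw [trace_one, Fintype.card_fin, Nat.cast_inj] at htr
    omega
  have hc := hP.eq_one_of_smul_one_sub (hP'P ▸ hP') h0 h1
  rw [div_eq_one_iff_eq (Nat.cast_ne_zero.mpr (NeZero.ne m))] at hc
  exact_mod_cast hc.symm

lemma finrank_span_range_realCoords_le {ι : Type*} {m : ℕ} (hm : 0 < m)
    {Q : ι → Matrix (Fin m) (Fin m) 𝕜} (hQ : ∀ j, Q j ∈ tracelessSelfAdjoint 𝕜 (Fin m)) :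
    finrank ℝ (span ℝ (Set.range fun j => realCoords (Q j))) ≤ dF 𝕜 m :=
  calc finrank ℝ (span ℝ (Set.range fun j => realCoords (Q j)))
      ≤ finrank ℝ ((tracelessSelfAdjoint 𝕜 (Fin m)).map realCoords) :=
        finrank_mono (span_le.mpr (Set.range_subset_iff.mpr fun j => mem_map_of_mem (hQ j)))
    _ ≤ finrank ℝ (tracelessSelfAdjoint 𝕜 (Fin m)) := finrank_map_le _ _
    _ ≤ dF 𝕜 m := finrank_tracelessSelfAdjoint_le_dF hm

theorem stmt4_general {n l m : ℕ} (hl : 0 < l) (hlm : l < m)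
    (hn : n = 2 * dF 𝕜 m) (hn' : dF 𝕜 m + 1 < n)
    (P : Fin n → Matrix (Fin m) (Fin m) 𝕜)
    (hFF : IsFusionFrame l P)
    -- the maximal cross inner product equals `l²/m`
    (hmaxle : ∀ j k : Fin n, j ≠ k → RCLike.re ((P j * P k).trace) ≤ (l : ℝ) ^ 2 / m) :
    m = 2 * l := by
  obtain ⟨hHerm, hIdem, hRank, -⟩ := hFF
  have htr (j : Fin n) : (P j).trace = l := by
    rw [trace_eq_rank_of_isIdempotentElem (hIdem j), hRank j]
  set Q := fun j => P j - ((l : 𝕜) / m) • 1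
  set v := fun j => realCoords (Q j)
  have hinner (j k : Fin n) : ⟪v j, v k⟫ = RCLike.re (P j * P k).trace - (l : ℝ) ^ 2 / m :=
    inner_realCoords_sub_div_smul_one (hHerm j) (htr j) (htr k)
  have hnorm (j : Fin n) : ⟪v j, v j⟫ = l - (l : ℝ) ^ 2 / m := by
    rw [hinner, hIdem j, htr, RCLike.natCast_re]
  have hpos : 0 < (l : ℝ) - (l : ℝ) ^ 2 / m := by
    have hl' : (0 : ℝ) < l := by exact_mod_cast hl
    have hlm' : (l : ℝ) < m := by exact_mod_cast hlm
    rw [sub_pos, div_lt_iff₀ (by linarith), sq]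
    nlinarith
  by_cases hanti : Pairwise fun j k => ∀ c : ℝ, c < 0 → v k ≠ c • v j
  · have hcard := two_mul_card_le_three_mul_finrank_span_range v
      (fun j hj => hpos.ne' (by rw [← hnorm j, hj, inner_zero_left]))
      (fun j k hjk => show ⟪v j, v k⟫ ≤ 0 by rw [hinner]; linarith [hmaxle j k hjk]) hanti
    have hdim : finrank ℝ (span ℝ (Set.range v)) ≤ dF 𝕜 m :=
      finrank_span_range_realCoords_le (hl.trans hlm)
        fun j => sub_div_smul_one_mem_tracelessSelfAdjoint (hHerm j) (htr j)
    rw [Fintype.card_fin] at hcard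
    omega
  · obtain ⟨j, k, -, c, hc, hvc⟩ : ∃ j k, j ≠ k ∧ ∃ c : ℝ, c < 0 ∧ v k = c • v j := by
      simpa [Pairwise] using hanti
    have hc1 := eq_neg_one_of_eq_smul (hnorm j ▸ hpos.ne') ((hnorm k).trans (hnorm j).symm) hc hvc
    have hQ : Q k = -Q j := realCoords_injective (by simpa [v, hc1] using hvc)
    exact eq_two_mul_of_sub_div_smul_one_eq_neg hl hlm (hIdem j) (hIdem k) (htr j) hQ

theorem stmt4 {n l m : ℕ} (hl : 0 < l) (hlm : l < m)
    (hn : n = 2 * dF 𝕜 m) (hn' : dF 𝕜 m + 1 < n)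
    (P : Fin n → Matrix (Fin m) (Fin m) 𝕜)
    (hFF : IsFusionFrame l P)
    -- the maximal cross inner product equals `l²/m`
    (hmaxle : ∀ j k : Fin n, j ≠ k → RCLike.re ((P j * P k).trace) ≤ (l : ℝ) ^ 2 / m)
    (hmaxeq : ∃ j k : Fin n, j ≠ k ∧ RCLike.re ((P j * P k).trace) = (l : ℝ) ^ 2 / m) :
    m = 2 * l :=
  stmt4_general hl hlm hn hn' P hFF hmaxle

end
end

section
/- Let 𝕊 be a collection of subsets of {1,…,m}, each of size l, such that |J ∩ J'| ≤ l²/m for all distinct J, J' ∈ 𝕊 (𝕊 is l²/m-cohesive). Let {B_k}_{k∈K} be a set of mutually unbiased bases of 𝔽^m with |K|·|𝕊| > d_𝔽(m) + 1, and set n = |K|·|𝕊|. If the family F = { P_J^{(k)} : k ∈ K, J ∈ 𝕊 } of coordinate projections P_J^{(k)} (the J-coordinate projection with respect to B_k) forms an (n,l,m)-fusion frame, then max over distinct pairs of projections in F of tr(P P') equals l²/m (F achieves the orthoplex bound). Moreover, if |𝕊| = 2(m−1) with the cohesiveness bound l²/m (𝕊 is maximally orthoplectic) and |K| = k_𝔽(m),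 then F is a tight fusion frame consisting of n = 2·d_𝔽(m) projections achieving max tr(P P') = l²/m over distinct pairs (a tight maximal orthoplectic fusion frame). -/
open Matrix

noncomputable section

variable {𝕜 : Type*} [RCLike 𝕜]

/-! The centred indicator vectors `1_J - (l/m)𝟙`, `J ∈ 𝕊`, lie in the hyperplane `𝟙ᗮ` of
dimension `m - 1` and have pairwise inner products `|J ∩ J'| - l²/m ≤ 0`. A family of nonzero
vectors with pairwise non-positive inner products in dimension `n` has at most `2n` members
(project away one of them and induct), so `|𝕊| ≤ 2(m - 1)`; if it has exactly `2n` members of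
equal norm it is an orthoplex `±e₁, …, ±eₙ` and sums to zero, which for `|𝕊| = 2(m - 1)` says that
every coordinate lies in exactly `|𝕊| l/m` members of `𝕊`.

For coordinate projections, `tr(P_J^{(k)} P_{J'}^{(k')})` is `|J ∩ J'|` when `k = k'` and `l²/m`
otherwise, giving the orthoplex bound; it is attained because `|K||𝕊| > d_𝔽(m) + 1 ≥ 2(m - 1)`
forces at least two bases. Summing the projections of one basis over `𝕊` gives `(|𝕊| l/m) I` by
the covering count, hence tightness. -/

open Module Finset
open scoped RealInnerProductSpace

section ObtuseFamily

variable {E : Type*} [NormedAddCommGroup E] [InnerProductSpace ℝ E]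

lemma inner_orthogonalProjectionOnto_orthogonal_span_singleton (e x y : E) :
    ⟪(ℝ ∙ e)ᗮ.orthogonalProjectionOnto x, (ℝ ∙ e)ᗮ.orthogonalProjectionOnto y⟫ =
      ⟪x, y⟫ - ⟪e, x⟫ * ⟪e, y⟫ / ‖e‖ ^ 2 := by
  rw [Submodule.coe_inner, Submodule.orthogonalProjectionOnto_orthogonal,
    Submodule.orthogonalProjectionOnto_orthogonal]
  simp only [Submodule.starProjection_singleton, RCLike.ofReal_real_eq_id, id_eq,
    inner_sub_left, inner_sub_right, real_inner_smul_left, real_inner_smul_right,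
    real_inner_self_eq_norm_sq, real_inner_comm x e]
  rcases eq_or_ne ‖e‖ 0 with he | he
  · simp [he]
  · field_simp
    ring

lemma eq_smul_of_orthogonalProjectionOnto_orthogonal_span_singleton_eq_zero {e x : E}
    (h : (ℝ ∙ e)ᗮ.orthogonalProjectionOnto x = 0) : x = (⟪e, x⟫ / ‖e‖ ^ 2) • e := by
  rw [Submodule.orthogonalProjectionOnto_orthogonal, Submodule.mk_eq_zero, sub_eq_zero,
    Submodule.starProjection_singleton] at h
  exact h

lemma inner_orthogonalProjectionOnto_orthogonal_span_singleton_nonpos {e x y : E}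
    (hx : ⟪e, x⟫ ≤ 0) (hy : ⟪e, y⟫ ≤ 0) (hxy : ⟪x, y⟫ ≤ 0) :
    ⟪(ℝ ∙ e)ᗮ.orthogonalProjectionOnto x, (ℝ ∙ e)ᗮ.orthogonalProjectionOnto y⟫ ≤ 0 := by
  rw [inner_orthogonalProjectionOnto_orthogonal_span_singleton]
  have : 0 ≤ ⟪e, x⟫ * ⟪e, y⟫ / ‖e‖ ^ 2 := by
    have := mul_nonneg_of_nonpos_of_nonpos hx hy
    positivity
  linarith

lemma inner_pos_of_orthogonalProjectionOnto_orthogonal_span_singleton_eq_zero {e x y : E}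
    (hx₀ : x ≠ 0) (hy₀ : y ≠ 0) (hx : ⟪e, x⟫ ≤ 0) (hy : ⟪e, y⟫ ≤ 0)
    (hπx : (ℝ ∙ e)ᗮ.orthogonalProjectionOnto x = 0)
    (hπy : (ℝ ∙ e)ᗮ.orthogonalProjectionOnto y = 0) : 0 < ⟪x, y⟫ := by
  have hxy := inner_orthogonalProjectionOnto_orthogonal_span_singleton e x y
  rw [hπx, hπy, inner_zero_left] at hxy
  have hx' : ⟪e, x⟫ ≠ 0 := fun h => hx₀ <| by
    rw [eq_smul_of_orthogonalProjectionOnto_orthogonal_span_singleton_eq_zero hπx, h, zero_div, zero_smul]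
  have hy' : ⟪e, y⟫ ≠ 0 := fun h => hy₀ <| by
    rw [eq_smul_of_orthogonalProjectionOnto_orthogonal_span_singleton_eq_zero hπy, h, zero_div, zero_smul]
  have he : e ≠ 0 := by rintro rfl; simp at hx'
  have : 0 < ⟪e, x⟫ * ⟪e, y⟫ / ‖e‖ ^ 2 :=
    div_pos (mul_pos_of_neg_of_neg (hx.lt_of_ne hx') (hy.lt_of_ne hy')) (by positivity)
  linarith

lemma eq_neg_of_orthogonalProjectionOnto_orthogonal_span_singleton_eq_zero {e x : E}
    (he : e ≠ 0) (hx : ⟪e, x⟫ ≤ 0) (hnorm : ‖x‖ = ‖e‖)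
    (hπ : (ℝ ∙ e)ᗮ.orthogonalProjectionOnto x = 0) : x = -e := by
  set c := ⟪e, x⟫ / ‖e‖ ^ 2
  have hxc : x = c • e :=
    eq_smul_of_orthogonalProjectionOnto_orthogonal_span_singleton_eq_zero hπ
  have hc : |c| = 1 := by
    rw [hxc, norm_smul, Real.norm_eq_abs] at hnorm
    exact (mul_eq_right₀ (norm_ne_zero_iff.mpr he)).mp hnorm
  have hc' : c = -1 := by
    rw [abs_of_nonpos (div_nonpos_of_nonpos_of_nonneg hx (sq_nonneg _))] at hc
    linarith
  rw [hxc, hc', neg_one_smul]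

variable [FiniteDimensional ℝ E]

theorem card_le_two_mul_finrank_of_pairwise_inner_nonpos {ι : Type*} [Fintype ι] {v : ι → E}
    (hv : ∀ i, v i ≠ 0) (hobt : Pairwise fun i j => ⟪v i, v j⟫ ≤ 0) :
    Fintype.card ι ≤ 2 * finrank ℝ E := by
  induction hn : finrank ℝ E generalizing E ι with
  | zero =>
    have : Subsingleton E := finrank_zero_iff.mp hn
    have : IsEmpty ι := ⟨fun i => hv i (Subsingleton.elim _ _)⟩
    simp
  | succ n ih =>
    obtain _ | ⟨⟨i₀⟩⟩ := isEmpty_or_nonempty ι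
    · simp
    classical
    set e := v i₀
    have : Fact (finrank ℝ E = n + 1) := ⟨hn⟩
    let w i := (ℝ ∙ e)ᗮ.orthogonalProjectionOnto (v i)
    set Z : Finset ι := {i | i ≠ i₀ ∧ w i = 0}
    have hZ : #Z ≤ 1 := by
      refine card_le_one.mpr fun i hi j hj => by_contra fun hij => ?_
      simp only [Z, mem_filter, mem_univ, true_and] at hi hj
      exact (hobt hij).not_gt <|
        inner_pos_of_orthogonalProjectionOnto_orthogonal_span_singleton_eq_zero (hv i) (hv j)
          (hobt hi.1.symm) (hobt hj.1.symm) hi.2 hj.2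
    set S : Finset ι := {i | i ≠ i₀ ∧ w i ≠ 0}
    have hS : #S ≤ 2 * n := by
      have := ih (v := fun i : S => w i) (fun i => (mem_filter.mp i.2).2.2)
        (fun i j hij => inner_orthogonalProjectionOnto_orthogonal_span_singleton_nonpos
          (hobt (mem_filter.mp i.2).2.1.symm) (hobt (mem_filter.mp j.2).2.1.symm)
          (hobt fun h => hij (Subtype.ext h)))
        (Submodule.finrank_orthogonal_span_singleton (hv i₀))
      rwa [Fintype.card_coe] at this
    have hcover : (univ : Finset ι) ⊆ {i₀} ∪ Z ∪ S := by
      intro i _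
      by_cases h₀ : i = i₀ <;> by_cases hw₀ : w i = 0 <;> simp [Z, S, h₀, hw₀]
    have h₁ := card_le_card hcover
    have h₂ := card_union_le ({i₀} ∪ Z) S
    have h₃ := card_union_le {i₀} Z
    rw [card_univ] at h₁
    rw [card_singleton] at h₃
    omega

theorem sum_eq_zero_of_pairwise_inner_nonpos_of_two_mul_finrank_le {ι : Type*} [Fintype ι]
    {v : ι → E} (hv : ∀ i, v i ≠ 0) (hnorm : ∀ i j, ‖v i‖ = ‖v j‖)
    (hobt : Pairwise fun i j => ⟪v i, v j⟫ ≤ 0) (hcard : 2 * finrank ℝ E ≤ Fintype.card ι) :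
    ∑ i, v i = 0 := by
  induction hn : finrank ℝ E generalizing E ι with
  | zero =>
    have : Subsingleton E := finrank_zero_iff.mp hn
    exact Subsingleton.elim _ _
  | succ n ih =>
    classical
    obtain ⟨i₀⟩ : Nonempty ι := Fintype.card_pos_iff.mp (by omega)
    set e := v i₀
    have : Fact (finrank ℝ E = n + 1) := ⟨hn⟩
    have hW : finrank ℝ (ℝ ∙ e)ᗮ = n := Submodule.finrank_orthogonal_span_singleton (hv i₀)
    -- by the cardinality bound in `eᗮ`, some `v i₁` projects to zero, and then `v i₁ = -e`
    obtain ⟨i₁, hi₁, hvi₁⟩ : ∃ i₁ ∈ univ.erase i₀, v i₁ = -e := by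
      by_contra! hno
      have := card_le_two_mul_finrank_of_pairwise_inner_nonpos
        (v := fun i : univ.erase i₀ => (ℝ ∙ e)ᗮ.orthogonalProjectionOnto (v i))
        (fun i h => hno i i.2 <| eq_neg_of_orthogonalProjectionOnto_orthogonal_span_singleton_eq_zero
          (hv i₀) (hobt (ne_of_mem_erase i.2).symm) (hnorm i i₀) h)
        (fun i j hij => inner_orthogonalProjectionOnto_orthogonal_span_singleton_nonpos
          (hobt (ne_of_mem_erase i.2).symm) (hobt (ne_of_mem_erase j.2).symm)
          (hobt fun h => hij (Subtype.ext h)))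
      rw [Fintype.card_coe, card_erase_of_mem (mem_univ _), card_univ, hW] at this
      omega
    have horth : ∀ i ∈ (univ.erase i₀).erase i₁, v i ∈ (ℝ ∙ e)ᗮ := by
      intro i hi
      rw [Submodule.mem_orthogonal_singleton_iff_inner_right]
      have h₀ : ⟪e, v i⟫ ≤ 0 := hobt (ne_of_mem_erase (mem_of_mem_erase hi)).symm
      have h₁ : ⟪v i₁, v i⟫ ≤ 0 := hobt (ne_of_mem_erase hi).symm
      rw [hvi₁, inner_neg_left] at h₁
      exact le_antisymm h₀ (neg_nonpos.mp h₁)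
    have hrest := ih (v := fun i : (univ.erase i₀).erase i₁ => (⟨v i, horth i i.2⟩ : (ℝ ∙ e)ᗮ))
      (fun i h => hv i (congrArg Subtype.val h)) (fun i j => hnorm i j)
      (fun i j hij => hobt fun h => hij (Subtype.ext h)) (by
        rw [Fintype.card_coe, card_erase_of_mem hi₁, card_erase_of_mem (mem_univ _), card_univ]
        omega) hW
    have hrest' : ∑ i ∈ (univ.erase i₀).erase i₁, v i = 0 := by
      simpa [← sum_coe_sort ((univ.erase i₀).erase i₁)] using congrArg Subtype.val hrest
    rw [← add_sum_erase _ _ (mem_univ i₀), ← add_sum_erase _ _ hi₁, hrest', hvi₁]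
    simp [e]

end ObtuseFamily

section CohesiveFamily

variable {m : ℕ}

def indicatorVec (J : Finset (Fin m)) : EuclideanSpace ℝ (Fin m) :=
  WithLp.toLp 2 fun i => if i ∈ J then 1 else 0

lemma inner_indicatorVec (J J' : Finset (Fin m)) :
    ⟪indicatorVec J, indicatorVec J'⟫ = #(J ∩ J') := by
  simp [indicatorVec, PiLp.inner_apply]

lemma finrank_orthogonal_span_indicatorVec_univ (hm : 0 < m) :
    finrank ℝ (ℝ ∙ indicatorVec (univ : Finset (Fin m)))ᗮ = m - 1 := by
  have : Fact (finrank ℝ (EuclideanSpace ℝ (Fin m)) = m - 1 + 1) :=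
    ⟨by rw [finrank_euclideanSpace_fin]; omega⟩
  refine Submodule.finrank_orthogonal_span_singleton fun h => ?_
  simpa [indicatorVec] using congrArg (· ⟨0, hm⟩) h

-- `1_J - (#J / m) • 𝟙`, where `𝟙 = indicatorVec univ`
def centredIndicator (J : Finset (Fin m)) : (ℝ ∙ indicatorVec (univ : Finset (Fin m)))ᗮ :=
  (ℝ ∙ indicatorVec univ)ᗮ.orthogonalProjectionOnto (indicatorVec J)

lemma inner_centredIndicator (J J' : Finset (Fin m)) :
    ⟪centredIndicator J, centredIndicator J'⟫ = #(J ∩ J') - #J * #J' / m := by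
  have hm : ‖indicatorVec (univ : Finset (Fin m))‖ ^ 2 = m := by
    rw [← real_inner_self_eq_norm_sq, inner_indicatorVec]
    simp
  rw [centredIndicator, centredIndicator, inner_orthogonalProjectionOnto_orthogonal_span_singleton,
    hm]
  simp [inner_indicatorVec]

lemma centredIndicator_ne_zero {J : Finset (Fin m)} (h₀ : 0 < #J) (hm : #J < m) :
    centredIndicator J ≠ 0 := by
  intro h
  have hJ := inner_centredIndicator J J
  rw [h, inner_zero_left, inter_self] at hJ
  have : (#J : ℝ) * #J / m < #J := by
    rw [div_lt_iff₀ (by exact_mod_cast h₀.trans hm)]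
    exact mul_lt_mul_of_pos_left (by exact_mod_cast hm) (by exact_mod_cast h₀)
  linarith

variable {l : ℕ} {𝕊 : Finset (Finset (Fin m))}

lemma pos_and_lt_of_one_lt_card (hsize : ∀ J ∈ 𝕊, #J = l) (h : 1 < #𝕊) : 0 < l ∧ l < m := by
  obtain ⟨J, hJ, J', hJ', hne⟩ := one_lt_card.mp h
  have hlm : l ≤ m := by simpa [hsize J hJ] using card_le_univ J
  refine ⟨Nat.pos_of_ne_zero fun hl => hne ?_, hlm.lt_of_ne fun hl => hne ?_⟩
  · subst hl
    rw [card_eq_zero.mp (hsize J hJ), card_eq_zero.mp (hsize J' hJ')]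
  · subst hl
    rw [eq_univ_of_card J (by simp [hsize J hJ]), eq_univ_of_card J' (by simp [hsize J' hJ'])]

lemma norm_centredIndicator_eq (hsize : ∀ J ∈ 𝕊, #J = l) (J J' : 𝕊) :
    ‖centredIndicator (J : Finset (Fin m))‖ = ‖centredIndicator (J' : Finset (Fin m))‖ := by
  simp only [norm_eq_sqrt_real_inner, inner_centredIndicator, inter_self, hsize J J.2,
    hsize J' J'.2]

lemma pairwise_inner_centredIndicator_nonpos (hsize : ∀ J ∈ 𝕊, #J = l)
    (hcoh : ∀ J ∈ 𝕊, ∀ J' ∈ 𝕊, J ≠ J' → (#(J ∩ J') : ℝ) ≤ l ^ 2 / m) :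
    Pairwise fun J J' : 𝕊 =>
      ⟪centredIndicator (J : Finset (Fin m)), centredIndicator (J' : Finset (Fin m))⟫ ≤ 0 := by
  intro J J' hne
  have := hcoh J J.2 J' J'.2 fun h => hne (Subtype.ext h)
  rw [inner_centredIndicator, hsize J J.2, hsize J' J'.2]
  linarith [show ((l : ℝ) * l / m) = l ^ 2 / m by ring]

theorem card_le_two_mul_of_cohesive (hl : 0 < l) (hlm : l < m) (hsize : ∀ J ∈ 𝕊, #J = l)
    (hcoh : ∀ J ∈ 𝕊, ∀ J' ∈ 𝕊, J ≠ J' → (#(J ∩ J') : ℝ) ≤ l ^ 2 / m) :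
    #𝕊 ≤ 2 * (m - 1) := by
  have := card_le_two_mul_finrank_of_pairwise_inner_nonpos
    (v := fun J : 𝕊 => centredIndicator (J : Finset (Fin m)))
    (fun J => centredIndicator_ne_zero (by rw [hsize J J.2]; exact hl) (by rw [hsize J J.2]; exact hlm))
    (pairwise_inner_centredIndicator_nonpos hsize hcoh)
  rwa [Fintype.card_coe, finrank_orthogonal_span_indicatorVec_univ (hl.trans hlm)] at this

theorem card_filter_mem_of_cohesive (hl : 0 < l) (hlm : l < m) (hsize : ∀ J ∈ 𝕊, #J = l)
    (hcoh : ∀ J ∈ 𝕊, ∀ J' ∈ 𝕊, J ≠ J' → (#(J ∩ J') : ℝ) ≤ l ^ 2 / m)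
    (hcard : #𝕊 = 2 * (m - 1)) (i : Fin m) :
    (#{J ∈ 𝕊 | i ∈ J} : ℝ) = #𝕊 * l / m := by
  have hsum := sum_eq_zero_of_pairwise_inner_nonpos_of_two_mul_finrank_le
    (v := fun J : 𝕊 => centredIndicator (J : Finset (Fin m)))
    (fun J => centredIndicator_ne_zero (by rw [hsize J J.2]; exact hl) (by rw [hsize J J.2]; exact hlm))
    (norm_centredIndicator_eq hsize) (pairwise_inner_centredIndicator_nonpos hsize hcoh)
    (by rw [Fintype.card_coe, finrank_orthogonal_span_indicatorVec_univ (hl.trans hlm), hcard])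
  have := congrArg (⟪centredIndicator {i}, ·⟫) hsum
  simp only [inner_sum, inner_zero_right, inner_centredIndicator, card_singleton,
    singleton_inter, Nat.cast_one, one_mul, hsize _ (Subtype.prop _)] at this
  rw [sum_coe_sort 𝕊 fun J => ((#(if i ∈ J then {i} else ∅) : ℕ) : ℝ) - l / m] at this
  simp only [apply_ite card, card_singleton, card_empty, Nat.cast_ite, Nat.cast_one, Nat.cast_zero,
    sum_sub_distrib, sum_boole, sum_const, nsmul_eq_mul] at this
  rw [mul_div_assoc]
  linarith

end CohesiveFamily

section CoordinateProjection

variable {m : ℕ}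

def coordProj (b : Fin m → Fin m → 𝕜) (J : Finset (Fin m)) : Matrix (Fin m) (Fin m) 𝕜 :=
  ∑ j ∈ J, vecMulVec (b j) (star (b j))

lemma re_trace_vecMulVec_mul_vecMulVec (x y : Fin m → 𝕜) :
    RCLike.re (vecMulVec x (star x) * vecMulVec y (star y)).trace = ‖star x ⬝ᵥ y‖ ^ 2 := by
  rw [vecMulVec_mul_vecMulVec, trace_vecMulVec, dotProduct_smul, smul_eq_mul, dotProduct_star,
    dotProduct_comm y, RCLike.star_def, RCLike.mul_conj, ← RCLike.ofReal_pow, RCLike.ofReal_re]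

lemma re_trace_coordProj_mul (b b' : Fin m → Fin m → 𝕜) (J J' : Finset (Fin m)) :
    RCLike.re (coordProj b J * coordProj b' J').trace =
      ∑ j ∈ J, ∑ j' ∈ J', ‖star (b j) ⬝ᵥ b' j'‖ ^ 2 := by
  simp only [coordProj, sum_mul_sum, trace_sum, map_sum, re_trace_vecMulVec_mul_vecMulVec]

lemma re_trace_coordProj_mul_of_orthonormal {b : Fin m → Fin m → 𝕜}
    (horth : ∀ j j', star (b j) ⬝ᵥ b j' = if j = j' then 1 else 0) (J J' : Finset (Fin m)) :
    RCLike.re (coordProj b J * coordProj b J').trace = #(J ∩ J') := by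
  simp [re_trace_coordProj_mul, horth, apply_ite, sum_ite_eq]

lemma re_trace_coordProj_mul_of_unbiased {b b' : Fin m → Fin m → 𝕜}
    (hmub : ∀ j j', ‖star (b j) ⬝ᵥ b' j'‖ ^ 2 = 1 / (m : ℝ)) (J J' : Finset (Fin m)) :
    RCLike.re (coordProj b J * coordProj b' J').trace = #J * #J' / m := by
  simp only [re_trace_coordProj_mul, hmub, sum_const, nsmul_eq_mul]
  ring

lemma sum_vecMulVec_of_orthonormal {b : Fin m → Fin m → 𝕜}
    (horth : ∀ j j', star (b j) ⬝ᵥ b j' = if j = j' then 1 else 0) :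
    ∑ j, vecMulVec (b j) (star (b j)) = 1 := by
  set U : Matrix (Fin m) (Fin m) 𝕜 := of fun i j => b j i
  have hU : Uᴴ * U = 1 := by
    ext j j'
    simpa [U, mul_apply, dotProduct, one_apply] using horth j j'
  have hU' : U * Uᴴ = 1 := mul_eq_one_comm.mp hU
  rw [← hU']
  ext i i'
  simp [U, Matrix.sum_apply, mul_apply, vecMulVec_apply]

lemma sum_coordProj_of_card_filter_mem {b : Fin m → Fin m → 𝕜}
    (horth : ∀ j j', star (b j) ⬝ᵥ b j' = if j = j' then 1 else 0)
    {𝕊 : Finset (Finset (Fin m))} {c : ℝ} (hc : ∀ j, (#{J ∈ 𝕊 | j ∈ J} : ℝ) = c) :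
    ∑ J ∈ 𝕊, coordProj b J = (c : 𝕜) • 1 := by
  have hcount j : ∑ J ∈ 𝕊, (if j ∈ J then vecMulVec (b j) (star (b j)) else 0) =
      (c : 𝕜) • vecMulVec (b j) (star (b j)) := by
    rw [← sum_filter, sum_const, ← Nat.cast_smul_eq_nsmul 𝕜, ← hc j, RCLike.ofReal_natCast]
  have hproj J : coordProj b J = ∑ j, if j ∈ J then vecMulVec (b j) (star (b j)) else 0 := by
    rw [sum_ite_mem, univ_inter, coordProj]
  rw [sum_congr rfl fun J _ => hproj J, sum_comm]
  simp only [hcount, ← smul_sum, sum_vecMulVec_of_orthonormal horth]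

lemma re_trace_coordProj_mul_le_of_cohesive {K : Type*} {b : K → Fin m → Fin m → 𝕜}
    (horth : ∀ k, ∀ j j', star (b k j) ⬝ᵥ b k j' = if j = j' then 1 else 0)
    (hmub : ∀ k k', k ≠ k' → ∀ j j', ‖star (b k j) ⬝ᵥ b k' j'‖ ^ 2 = 1 / (m : ℝ))
    {l : ℕ} {𝕊 : Finset (Finset (Fin m))} (hsize : ∀ J ∈ 𝕊, #J = l)
    (hcoh : ∀ J ∈ 𝕊, ∀ J' ∈ 𝕊, J ≠ J' → (#(J ∩ J') : ℝ) ≤ l ^ 2 / m) (p q : K × 𝕊)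
    (hpq : p ≠ q) :
    RCLike.re (coordProj (b p.1) p.2 * coordProj (b q.1) q.2).trace ≤ l ^ 2 / m := by
  rcases p with ⟨k, J, hJ⟩
  rcases q with ⟨k', J', hJ'⟩
  by_cases hk : k = k'
  · subst hk
    have hJJ' : J ≠ J' := fun h => hpq (by subst h; rfl)
    exact (re_trace_coordProj_mul_of_orthonormal (horth k) J J').trans_le (hcoh J hJ J' hJ' hJJ')
  · rw [re_trace_coordProj_mul_of_unbiased (hmub k k' hk), hsize J hJ, hsize J' hJ', sq]

lemma sum_coordProj_prod_of_card_filter_mem {K : Type*} [Fintype K] {b : K → Fin m → Fin m → 𝕜}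
    (horth : ∀ k, ∀ j j', star (b k j) ⬝ᵥ b k j' = if j = j' then 1 else 0)
    {𝕊 : Finset (Finset (Fin m))} {c : ℝ} (hc : ∀ j, (#{J ∈ 𝕊 | j ∈ J} : ℝ) = c) :
    ∑ p : K × 𝕊, coordProj (b p.1) p.2 = ((Fintype.card K * c : ℝ) : 𝕜) • 1 := by
  rw [Fintype.sum_prod_type]
  simp only [sum_coe_sort 𝕊 (coordProj (b _)), sum_coordProj_of_card_filter_mem (horth _) hc,
    sum_const, card_univ, ← Nat.cast_smul_eq_nsmul 𝕜, smul_smul]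
  push_cast
  rfl

end CoordinateProjection

open scoped Classical in
lemma two_mul_sub_one_le_dF_add_one (m : ℕ) : 2 * (m - 1) ≤ dF 𝕜 m + 1 := by
  unfold dF
  split_ifs
  · have : 4 * (m - 1) ≤ (m + 2) * (m - 1) + 2 := by
      rcases m with _ | m
      · simp
      · simp only [Nat.add_sub_cancel]; nlinarith [Nat.le_mul_self m]
    omega
  · have : 2 * m ≤ m ^ 2 + 1 := by nlinarith [sq_nonneg ((m : ℤ) - 1)]
    omega

open scoped Classical in
lemma card_mul_sub_one_eq_dF {k m : ℕ}
    (hk : (k : ℝ) = if (RCLike.I : 𝕜) = 0 then (m : ℝ) / 2 + 1 else (m : ℝ) + 1) :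
    k * (m - 1) = dF 𝕜 m := by
  unfold dF
  split_ifs at hk ⊢
  · have h2k : 2 * k = m + 2 := by exact_mod_cast (by linarith : (2 * k : ℝ) = m + 2)
    rw [← h2k, mul_assoc, Nat.mul_div_cancel_left _ two_pos]
  · have hk' : k = m + 1 := by exact_mod_cast hk
    rw [hk', ← Nat.sq_sub_sq, one_pow]

lemma one_lt_of_dF_add_one_lt_mul_card {m l k : ℕ} {𝕊 : Finset (Finset (Fin m))}
    (hsize : ∀ J ∈ 𝕊, #J = l)
    (hcoh : ∀ J ∈ 𝕊, ∀ J' ∈ 𝕊, J ≠ J' → (#(J ∩ J') : ℝ) ≤ l ^ 2 / m)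
    (hk : dF 𝕜 m + 1 < k * #𝕊) : 1 < k := by
  by_contra! h
  have h𝕊 : dF 𝕜 m + 1 < #𝕊 := hk.trans_le (mul_le_of_le_one_left (Nat.zero_le _) h)
  obtain ⟨hl, hlm⟩ := pos_and_lt_of_one_lt_card hsize (by omega)
  have := card_le_two_mul_of_cohesive hl hlm hsize hcoh
  have := two_mul_sub_one_le_dF_add_one (𝕜 := 𝕜) m
  omega

open scoped Classical in
theorem stmt13_general {m l : ℕ}
    -- a `l²/m`-cohesive collection `𝕊` of `l`-element subsets of `{1,…,m}`
    (𝕊 : Finset (Finset (Fin m)))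
    (hsize : ∀ J ∈ 𝕊, J.card = l)
    (hcoh : ∀ J ∈ 𝕊, ∀ J' ∈ 𝕊, J ≠ J' → ((J ∩ J').card : ℝ) ≤ (l : ℝ) ^ 2 / m)
    -- a set of mutually unbiased bases of `𝕜^m`
    {K : Type*} [Fintype K]
    (b : K → Fin m → (Fin m → 𝕜))
    (horth : ∀ k, ∀ j j' : Fin m, star (b k j) ⬝ᵥ b k j' = if j = j' then 1 else 0)
    (hmub : ∀ k k' : K, k ≠ k' → ∀ j j' : Fin m,
      ‖star (b k j) ⬝ᵥ b k' j'‖ ^ 2 = 1 / (m : ℝ))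
    -- with `n = |K|·|𝕊| > d_𝔽(m) + 1`
    (hn : dF 𝕜 m + 1 < Fintype.card K * 𝕊.card)
    -- the family of coordinate projections
    (P : K × {J // J ∈ 𝕊} → Matrix (Fin m) (Fin m) 𝕜)
    (hP : ∀ p, P p = ∑ j ∈ (p.2 : Finset (Fin m)), vecMulVec (b p.1 j) (star (b p.1 j))) :
    -- then it achieves the orthoplex bound:
    ((∀ p q, p ≠ q → RCLike.re ((P p * P q).trace) ≤ (l : ℝ) ^ 2 / m) ∧
      (∃ p q, p ≠ q ∧ RCLike.re ((P p * P q).trace) = (l : ℝ) ^ 2 / m)) ∧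
    -- and if `𝕊` is maximally orthoplectic and the set of bases is maximal, the
    -- resulting fusion frame is a tight maximal orthoplectic fusion frame
    (𝕊.card = 2 * (m - 1) →
      (Fintype.card K : ℝ) =
        (if (RCLike.I : 𝕜) = 0 then (m : ℝ) / 2 + 1 else (m : ℝ) + 1) →
      Fintype.card (K × {J // J ∈ 𝕊}) = 2 * dF 𝕜 m ∧
      ∃ A : ℝ, 0 < A ∧ ∑ p, P p = ((A : ℝ) : 𝕜) • (1 : Matrix (Fin m) (Fin m) 𝕜)) := by
  obtain rfl : P = fun p => coordProj (b p.1) p.2 := funext hP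
  beta_reduce
  obtain ⟨k, k', hk⟩ := Fintype.exists_pair_of_one_lt_card
    (one_lt_of_dF_add_one_lt_mul_card hsize hcoh hn)
  obtain ⟨J, hJ⟩ : 𝕊.Nonempty := nonempty_of_ne_empty fun h => by simp [h] at hn
  refine ⟨⟨re_trace_coordProj_mul_le_of_cohesive horth hmub hsize hcoh,
    (k, ⟨J, hJ⟩), (k', ⟨J, hJ⟩), fun h => hk congr(($h).1), ?_⟩, fun h𝕊 hK => ⟨?_, ?_⟩⟩
  · rw [re_trace_coordProj_mul_of_unbiased (hmub k k' hk), hsize J hJ, sq]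
  · rw [Fintype.card_prod, Fintype.card_coe, h𝕊, ← card_mul_sub_one_eq_dF hK]
    ring
  · have h𝕊pos : 0 < #𝕊 := card_pos.mpr ⟨J, hJ⟩
    obtain ⟨hl, hlm⟩ := pos_and_lt_of_one_lt_card hsize (by omega)
    refine ⟨_, ?_, sum_coordProj_prod_of_card_filter_mem horth
      (card_filter_mem_of_cohesive hl hlm hsize hcoh h𝕊)⟩
    have : (0 : ℝ) < m := by exact_mod_cast hl.trans hlm
    have : 0 < Fintype.card K := Fintype.card_pos_iff.mpr ⟨k⟩
    positivity

open scoped Classical in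
theorem stmt13 {m l : ℕ} (hm : 0 < m) (hl : 0 < l)
    -- a `l²/m`-cohesive collection `𝕊` of `l`-element subsets of `{1,…,m}`
    (𝕊 : Finset (Finset (Fin m)))
    (hsize : ∀ J ∈ 𝕊, J.card = l)
    (hcoh : ∀ J ∈ 𝕊, ∀ J' ∈ 𝕊, J ≠ J' → ((J ∩ J').card : ℝ) ≤ (l : ℝ) ^ 2 / m)
    -- a set of mutually unbiased bases of `𝕜^m`
    {K : Type*} [Fintype K]
    (b : K → Fin m → (Fin m → 𝕜))
    (horth : ∀ k, ∀ j j' : Fin m, star (b k j) ⬝ᵥ b k j' = if j = j' then 1 else 0)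
    (hmub : ∀ k k' : K, k ≠ k' → ∀ j j' : Fin m,
      ‖star (b k j) ⬝ᵥ b k' j'‖ ^ 2 = 1 / (m : ℝ))
    -- with `n = |K|·|𝕊| > d_𝔽(m) + 1`
    (hn : dF 𝕜 m + 1 < Fintype.card K * 𝕊.card)
    -- the family of coordinate projections
    (P : K × {J // J ∈ 𝕊} → Matrix (Fin m) (Fin m) 𝕜)
    (hP : ∀ p, P p = ∑ j ∈ (p.2 : Finset (Fin m)), vecMulVec (b p.1 j) (star (b p.1 j)))
    -- forms an `(n,l,m)`-fusion frame
    (hFF : IsFusionFrame l P) :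
    -- then it achieves the orthoplex bound:
    ((∀ p q, p ≠ q → RCLike.re ((P p * P q).trace) ≤ (l : ℝ) ^ 2 / m) ∧
      (∃ p q, p ≠ q ∧ RCLike.re ((P p * P q).trace) = (l : ℝ) ^ 2 / m)) ∧
    -- and if `𝕊` is maximally orthoplectic and the set of bases is maximal, the
    -- resulting fusion frame is a tight maximal orthoplectic fusion frame
    (𝕊.card = 2 * (m - 1) →
      (Fintype.card K : ℝ) =
        (if (RCLike.I : 𝕜) = 0 then (m : ℝ) / 2 + 1 else (m : ℝ) + 1) →
      Fintype.card (K × {J // J ∈ 𝕊}) = 2 * dF 𝕜 m ∧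
      ∃ A : ℝ, 0 < A ∧ ∑ p, P p = ((A : ℝ) : 𝕜) • (1 : Matrix (Fin m) (Fin m) 𝕜)) :=
  stmt13_general 𝕊 hsize hcoh b horth hmub hn P hP

end
end

section
/- For every r ≥ 1, S_r S_r^T = 2^{r−1}·I_{2^r} + (2^{r−1} − 1)·J_{2^r,2^r} and S_r F_r S_r^T = 2^{r−1}·(J_{2^r,2^r} − I_{2^r}), where J_{2^r,2^r} is the all-ones 2^r × 2^r matrix. Consequently, for m = 2^r, the columns of S_r are the incidence vectors of a collection 𝕊_r of 2(m−1) subsets of {1,…,m}, each of size m/2, that forms a 2-(m, m/2, m/2 − 1) block design. -/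
/-!
Write a row index of `S_{r+1}` as `a = 2^r t + x` with `t ∈ {0,1}`. By the recursion, row `a`
is the indicator of `t` on the two columns of `B^(i)`, row `x` of `S_r` on `B^(ii)`, and row `x`
of `S_r` composed with `F^t` on `B^(iii)`. So the twisted row products
`∑_b S(a,b) S(a',F^k b)` at level `r+1` are a sum of three such products at level `r`, with the
twist `k` shifted by `t + t'` in the last one; induction gives both Gram identities at once.
The same induction shows that every column has `2^(r-1)` ones and that the columns are distinct;
for a 0-1 matrix with distinct columns, the Gram identity counts the blocks through each pair.
-/

open Matrix

noncomputable section

/-- swap `2i ↔ 2i+1` -/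
def pairFlip (j : ℕ) : ℕ := if j % 2 = 0 then j + 1 else j - 1

/-- the entries of the recursively defined incidence matrices `S_r`
(`Sfun r a b` is the `(a,b)` entry of `S_r`, for `a < 2^r`, `b < 2^(r+1) - 2`) -/
def Sfun : ℕ → ℕ → ℕ → ℚ
  | 0, _, _ => 0
  | 1, a, b => if a = b then 1 else 0
  | r + 2, a, b =>
    if b = 0 then (if a < 2 ^ (r + 1) then 1 else 0)
    else if b = 1 then (if a < 2 ^ (r + 1) then 0 else 1)
    else if b < 2 ^ (r + 2) then Sfun (r + 1) (a % 2 ^ (r + 1)) (b - 2)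
    else if a < 2 ^ (r + 1) then Sfun (r + 1) a (b - 2 ^ (r + 2))
    else Sfun (r + 1) (a - 2 ^ (r + 1)) (pairFlip (b - 2 ^ (r + 2)))

/-- the matrix `S_r`, a `2^r × (2^(r+1) - 2)` matrix with rational (0-1) entries -/
def S (r : ℕ) : Matrix (Fin (2 ^ r)) (Fin (2 ^ (r + 1) - 2)) ℚ :=
  Matrix.of fun a b => Sfun r a b

/-- the permutation matrix `F_r = I_{2^r - 1} ⊗ [[0,1],[1,0]]` -/
def F (r : ℕ) : Matrix (Fin (2 ^ (r + 1) - 2)) (Fin (2 ^ (r + 1) - 2)) ℚ :=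
  Matrix.of fun a b => if (a : ℕ) = pairFlip (b : ℕ) then 1 else 0

/-- the block determined by the `b`-th column of `S_r` -/
def blockOf (r : ℕ) (b : Fin (2 ^ (r + 1) - 2)) : Finset (Fin (2 ^ r)) :=
  {a : Fin (2 ^ r) | S r a b = 1}

/-- the collection `𝕊_r` of blocks determined by the columns of `S_r` -/
def blocks (r : ℕ) : Finset (Finset (Fin (2 ^ r))) :=
  Finset.image (blockOf r) Finset.univ

/-- a `t`-`(m,l,λ)` block design (on the vertex set `Fin m`) -/
def IsBlockDesign {m : ℕ} (t l lam : ℕ) (𝕊 : Finset (Finset (Fin m))) : Prop :=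
  (∀ J ∈ 𝕊, J.card = l) ∧
  ∀ T : Finset (Fin m), T.card = t → ({J ∈ 𝕊 | T ⊆ J} : Finset _).card = lam

open Finset Function

lemma pairFlip_involutive : Involutive pairFlip := by
  intro j; unfold pairFlip; split <;> split <;> omega

lemma pairFlip_ne_self (j : ℕ) : pairFlip j ≠ j := by
  unfold pairFlip; split <;> omega

lemma pairFlip_add {m : ℕ} (hm : Even m) (j : ℕ) : pairFlip (m + j) = m + pairFlip j := by
  obtain ⟨m, rfl⟩ := hm
  unfold pairFlip; split <;> split <;> omega

lemma pairFlip_iterate (k j : ℕ) : pairFlip^[k] j = if Even k then j else pairFlip j := by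
  induction k with
  | zero => simp
  | succ k ih =>
    rw [iterate_succ_apply', ih]
    by_cases hk : Even k <;> simp [hk, Nat.even_add_one, pairFlip_involutive _]

lemma pairFlip_lt {n j : ℕ} (hn : Even n) (hj : j < n) : pairFlip j < n := by
  obtain ⟨n, rfl⟩ := hn
  unfold pairFlip; split <;> omega

lemma pairFlip_iterate_lt {n : ℕ} (hn : Even n) (k : ℕ) {j : ℕ} (hj : j < n) :
    pairFlip^[k] j < n := by
  rw [pairFlip_iterate]; split_ifs
  exacts [hj, pairFlip_lt hn hj]

lemma pairFlip_iterate_add {m : ℕ} (hm : Even m) (k j : ℕ) :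
    pairFlip^[k] (m + j) = m + pairFlip^[k] j := by
  rw [pairFlip_iterate, pairFlip_iterate]; split_ifs <;> simp [pairFlip_add hm]

lemma pairFlip_iterate_iterate (k j : ℕ) : pairFlip^[k] (pairFlip^[k] j) = j := by
  rw [pairFlip_iterate, pairFlip_iterate]; split_ifs <;> simp [pairFlip_involutive _]

lemma sum_range_comp_pairFlip_iterate {n : ℕ} (hn : Even n) (k : ℕ) (f : ℕ → ℚ) :
    ∑ c ∈ range n, f (pairFlip^[k] c) = ∑ c ∈ range n, f c :=
  sum_nbij' (pairFlip^[k]) (pairFlip^[k])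
    (fun _ hc => mem_range.2 (pairFlip_iterate_lt hn k (mem_range.1 hc)))
    (fun _ hc => mem_range.2 (pairFlip_iterate_lt hn k (mem_range.1 hc)))
    (fun _ _ => pairFlip_iterate_iterate k _) (fun _ _ => pairFlip_iterate_iterate k _)
    (fun _ _ => rfl)

lemma Sfun_eq_zero_or_one : ∀ r a b, Sfun r a b = 0 ∨ Sfun r a b = 1
  | 0, _, _ => Or.inl rfl
  | 1, a, b => by unfold Sfun; split <;> simp
  | r + 2, a, b => by
    unfold Sfun
    split_ifs <;> first | simp | exact Sfun_eq_zero_or_one (r + 1) _ _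

lemma even_two_pow_succ_sub_two (r : ℕ) : Even (2 ^ (r + 1) - 2) := by
  have := Nat.one_le_two_pow (n := r)
  exact ⟨2 ^ r - 1, by rw [pow_succ]; omega⟩

section Recursion

variable {r t x : ℕ}

lemma Sfun_succ_succ_of_lt_two (hx : x < 2 ^ (r + 1)) (ht : t < 2) {b : ℕ} (hb : b < 2) :
    Sfun (r + 2) (2 ^ (r + 1) * t + x) b = if t = b then 1 else 0 := by
  interval_cases t <;> interval_cases b <;> simp [Sfun, hx]

lemma Sfun_succ_succ_two_add (hx : x < 2 ^ (r + 1)) {c : ℕ} (hc : c < 2 ^ (r + 2) - 2) :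
    Sfun (r + 2) (2 ^ (r + 1) * t + x) (2 + c) = Sfun (r + 1) x c := by
  rw [Sfun, if_neg (by omega), if_neg (by omega), if_pos (by omega), Nat.mul_add_mod,
    Nat.mod_eq_of_lt hx, Nat.add_sub_cancel_left]

lemma Sfun_succ_succ_two_pow_add (hx : x < 2 ^ (r + 1)) (ht : t < 2) (c : ℕ) :
    Sfun (r + 2) (2 ^ (r + 1) * t + x) (2 ^ (r + 2) + c) = Sfun (r + 1) x (pairFlip^[t] c) := by
  have : 4 ≤ 2 ^ (r + 2) := Nat.pow_le_pow_right (n := 2) (by norm_num) (by omega : 2 ≤ r + 2)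
  rw [Sfun, if_neg (by omega), if_neg (by omega), if_neg (by omega), Nat.add_sub_cancel_left]
  interval_cases t
  · simp [hx]
  · rw [if_neg (by omega)]; simp

end Recursion

lemma sum_range_two_pow_succ_succ_sub_two (r : ℕ) (g : ℕ → ℚ) :
    ∑ b ∈ range (2 ^ (r + 3) - 2), g b =
      ∑ b ∈ range 2, g b + ∑ c ∈ range (2 ^ (r + 2) - 2), g (2 + c) +
        ∑ c ∈ range (2 ^ (r + 2) - 2), g (2 ^ (r + 2) + c) := by
  have : 4 ≤ 2 ^ (r + 2) := Nat.pow_le_pow_right (n := 2) (by norm_num) (by omega : 2 ≤ r + 2)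
  rw [show 2 ^ (r + 3) - 2 = 2 + (2 ^ (r + 2) - 2) + (2 ^ (r + 2) - 2) by rw [pow_succ]; omega,
    sum_range_add, sum_range_add, show 2 + (2 ^ (r + 2) - 2) = 2 ^ (r + 2) by omega]

lemma sum_range_two_pow_succ (r : ℕ) (g : ℕ → ℚ) :
    ∑ a ∈ range (2 ^ (r + 1)), g a =
      ∑ t ∈ range 2, ∑ x ∈ range (2 ^ r), g (2 ^ r * t + x) := by
  simp [pow_succ, mul_two, sum_range_add, sum_range_succ]

lemma exists_eq_two_pow_mul_add {r a : ℕ} (ha : a < 2 ^ (r + 1)) :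
    ∃ t < 2, ∃ x < 2 ^ r, a = 2 ^ r * t + x :=
  ⟨a / 2 ^ r, Nat.div_lt_of_lt_mul (by rwa [← pow_succ]), a % 2 ^ r,
    Nat.mod_lt _ (by positivity), (Nat.div_add_mod a _).symm⟩

lemma two_pow_mul_add_lt {r t x : ℕ} (ht : t < 2) (hx : x < 2 ^ r) :
    2 ^ r * t + x < 2 ^ (r + 1) := by
  interval_cases t <;> rw [pow_succ] <;> omega

lemma lt_two_or_exists_of_lt_two_pow_succ_succ_sub_two {r b : ℕ} (hb : b < 2 ^ (r + 3) - 2) :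
    b < 2 ∨ (∃ c < 2 ^ (r + 2) - 2, b = 2 + c) ∨
      ∃ c < 2 ^ (r + 2) - 2, b = 2 ^ (r + 2) + c := by
  have : 2 ^ (r + 3) = 2 ^ (r + 2) + 2 ^ (r + 2) := by rw [pow_succ]; omega
  by_cases hb2 : b < 2
  · exact .inl hb2
  by_cases hb4 : b < 2 ^ (r + 2)
  · exact .inr (.inl ⟨b - 2, by omega, by omega⟩)
  · exact .inr (.inr ⟨b - 2 ^ (r + 2), by omega, by omega⟩)

/-- `k = 0` gives the entries of `S r * (S r)ᵀ` and `k = 1` those of `S r * F r * (S r)ᵀ`;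
allowing every `k` makes the recursion below close up. -/
def twistedRowDot (r k a a' : ℕ) : ℚ :=
  ∑ b ∈ range (2 ^ (r + 1) - 2), Sfun r a b * Sfun r a' (pairFlip^[k] b)

lemma twistedRowDot_succ_succ {r k t t' x x' : ℕ} (ht : t < 2) (ht' : t' < 2)
    (hx : x < 2 ^ (r + 1)) (hx' : x' < 2 ^ (r + 1)) :
    twistedRowDot (r + 2) k (2 ^ (r + 1) * t + x) (2 ^ (r + 1) * t' + x') =
      (if t' = pairFlip^[k] t then 1 else 0) + twistedRowDot (r + 1) k x x' +
        twistedRowDot (r + 1) (t' + k + t) x x' := by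
  have hN := even_two_pow_succ_sub_two (r + 1)
  have h4 : Even (2 ^ (r + 2)) := (Nat.even_pow' (by omega)).2 even_two
  rw [twistedRowDot, sum_range_two_pow_succ_succ_sub_two]
  congr 1; congr 1
  · rw [sum_congr rfl fun b hb => by
      rw [Sfun_succ_succ_of_lt_two hx ht (mem_range.1 hb),
        Sfun_succ_succ_of_lt_two hx' ht' (pairFlip_iterate_lt even_two k (mem_range.1 hb))]]
    simp only [boole_mul, sum_ite_eq, mem_range, if_pos ht]
  · refine sum_congr rfl fun c hc => ?_
    rw [pairFlip_iterate_add even_two, Sfun_succ_succ_two_add hx (mem_range.1 hc),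
      Sfun_succ_succ_two_add hx' (pairFlip_iterate_lt hN k (mem_range.1 hc))]
  · rw [twistedRowDot, ← sum_range_comp_pairFlip_iterate hN t]
    refine sum_congr rfl fun c hc => ?_
    rw [pairFlip_iterate_add h4, Sfun_succ_succ_two_pow_add hx ht,
      Sfun_succ_succ_two_pow_add hx' ht', iterate_add_apply, iterate_add_apply,
      pairFlip_iterate_iterate]

theorem twistedRowDot_eq (r k : ℕ) {a a' : ℕ} (ha : a < 2 ^ (r + 1)) (ha' : a' < 2 ^ (r + 1)) :
    twistedRowDot (r + 1) k a a' =
      if Even k then (if a = a' then 2 ^ (r + 1) - 1 else 2 ^ r - 1)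
      else (if a = a' then 0 else 2 ^ r) := by
  induction r generalizing k a a' with
  | zero =>
    interval_cases a <;> interval_cases a' <;> by_cases hk : Even k <;>
      simp [twistedRowDot, Sfun, sum_range_succ, pairFlip_iterate, hk, pairFlip] <;> norm_num
  | succ r ih =>
    obtain ⟨t, ht, x, hx, rfl⟩ := exists_eq_two_pow_mul_add ha
    obtain ⟨t', ht', x', hx', rfl⟩ := exists_eq_two_pow_mul_add ha'
    rw [twistedRowDot_succ_succ ht ht' hx hx', ih _ hx hx', ih _ hx hx', pairFlip_iterate]
    have hlo : x ≠ 2 ^ (r + 1) + x' := by omega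
    have hhi : 2 ^ (r + 1) + x ≠ x' := by omega
    interval_cases t <;> interval_cases t' <;> by_cases hxx : x = x' <;>
      by_cases hk : Even k <;> simp [hxx, hk, hlo, hhi, parity_simps, pairFlip] <;> ring

theorem sum_Sfun_col (r : ℕ) {b : ℕ} (hb : b < 2 ^ (r + 2) - 2) :
    ∑ a ∈ range (2 ^ (r + 1)), Sfun (r + 1) a b = 2 ^ r := by
  induction r generalizing b with
  | zero => interval_cases b <;> simp [Sfun]
  | succ r ih =>
    have hN := even_two_pow_succ_sub_two (r + 1)
    rw [sum_range_two_pow_succ]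
    rcases lt_two_or_exists_of_lt_two_pow_succ_succ_sub_two hb with
      hb | ⟨c, hc, rfl⟩ | ⟨c, hc, rfl⟩
    · rw [sum_congr rfl fun t ht => sum_congr rfl fun x hx =>
        Sfun_succ_succ_of_lt_two (mem_range.1 hx) (mem_range.1 ht) hb]
      interval_cases b <;> simp [pow_succ]
    · rw [sum_congr rfl fun t _ => (sum_congr rfl fun x hx =>
        Sfun_succ_succ_two_add (mem_range.1 hx) hc).trans (ih hc)]
      simp [pow_succ, mul_comm]
    · rw [sum_congr rfl fun t ht => (sum_congr rfl fun x hx =>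
        Sfun_succ_succ_two_pow_add (mem_range.1 hx) (mem_range.1 ht) c).trans
          (ih (pairFlip_iterate_lt hN t hc))]
      simp [pow_succ, mul_comm]

lemma exists_Sfun_ne {r c : ℕ} (hc : c < 2 ^ (r + 2) - 2) (v : ℚ) :
    ∃ x < 2 ^ (r + 1), Sfun (r + 1) x c ≠ v := by
  by_contra! hconst
  have hsum := sum_Sfun_col r hc
  rw [sum_congr rfl fun x hx => hconst x (mem_range.1 hx), sum_const, card_range,
    nsmul_eq_mul] at hsum
  have hv : v = 0 ∨ v = 1 := hconst 0 (by positivity) ▸ Sfun_eq_zero_or_one (r + 1) 0 c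
  have hpos : (0 : ℚ) < 2 ^ r := by positivity
  rcases hv with rfl | rfl <;> push_cast [pow_succ] at hsum <;> linarith

theorem eq_of_Sfun_col_eq (r : ℕ) {b b' : ℕ}
    (hb : b < 2 ^ (r + 2) - 2) (hb' : b' < 2 ^ (r + 2) - 2)
    (h : ∀ a < 2 ^ (r + 1), Sfun (r + 1) a b = Sfun (r + 1) a b') : b = b' := by
  induction r generalizing b b' with
  | zero =>
    have := h b (by omega)
    interval_cases b <;> interval_cases b' <;> simp_all [Sfun]
  | succ r ih =>
    wlog hle : b ≤ b' generalizing b b'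
    · exact (this hb' hb (fun a ha => (h a ha).symm) (by omega)).symm
    have hN := even_two_pow_succ_sub_two (r + 1)
    have hrow : ∀ t < 2, ∀ x < 2 ^ (r + 1),
        Sfun (r + 2) (2 ^ (r + 1) * t + x) b = Sfun (r + 2) (2 ^ (r + 1) * t + x) b' :=
      fun t ht x hx => h _ (two_pow_mul_add_lt ht hx)
    have htop := hrow 0 (by norm_num)
    have hbot := hrow 1 (by norm_num)
    -- On the top half, columns `0, 1` are constant and columns `2 + c`, `2 ^ (r + 2) + c` are
    -- column `c` of `S_(r+1)`; on the bottom half the last two kinds differ by `pairFlip`.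
    rcases lt_two_or_exists_of_lt_two_pow_succ_succ_sub_two hb with
      hb2 | ⟨c, hc, rfl⟩ | ⟨c, hc, rfl⟩ <;>
    rcases lt_two_or_exists_of_lt_two_pow_succ_succ_sub_two hb' with
      hb2' | ⟨c', hc', rfl⟩ | ⟨c', hc', rfl⟩
    · have := htop 0 (by positivity)
      simp only [Sfun_succ_succ_of_lt_two (by positivity) (by norm_num : 0 < 2), hb2, hb2'] at this
      split_ifs at this <;> first | omega | norm_num at this
    · obtain ⟨x, hx, hne⟩ := exists_Sfun_ne hc' (if 0 = b then 1 else 0)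
      have := htop x hx
      rw [Sfun_succ_succ_of_lt_two hx (by norm_num) hb2, Sfun_succ_succ_two_add hx hc'] at this
      exact (hne this.symm).elim
    · obtain ⟨x, hx, hne⟩ := exists_Sfun_ne hc' (if 0 = b then 1 else 0)
      have := htop x hx
      rw [Sfun_succ_succ_of_lt_two hx (by norm_num) hb2,
        Sfun_succ_succ_two_pow_add hx (by norm_num)] at this
      exact (hne this.symm).elim
    · omega
    · congr 1
      exact ih hc hc' fun x hx => by
        simpa only [Sfun_succ_succ_two_add hx hc, Sfun_succ_succ_two_add hx hc'] using htop x hx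
    · refine absurd (ih hc' (pairFlip_iterate_lt hN 1 hc') fun x hx => ?_).symm
        (pairFlip_ne_self c')
      have htop := htop x hx
      have hbot := hbot x hx
      rw [Sfun_succ_succ_two_add hx hc, Sfun_succ_succ_two_pow_add hx (by norm_num)] at htop hbot
      exact htop.symm.trans hbot
    · omega
    · omega
    · congr 1
      exact ih hc hc' fun x hx => by
        simpa only [Sfun_succ_succ_two_pow_add hx (by norm_num : 0 < 2),
          iterate_zero_apply] using htop x hx

section Incidence

variable {m : ℕ} {ι : Type*}

def colBlock (M : Matrix (Fin m) ι ℚ) (b : ι) : Finset (Fin m) := {a | M a b = 1}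

lemma card_colBlock {M : Matrix (Fin m) ι ℚ} (hM : ∀ a b, M a b = 0 ∨ M a b = 1) (b : ι) :
    ((colBlock M b).card : ℚ) = ∑ a, M a b := by
  rw [colBlock, card_filter]; push_cast
  exact sum_congr rfl fun a _ => by rcases hM a b with h | h <;> simp [h]

lemma card_filter_pair_subset_colBlock [Fintype ι] {M : Matrix (Fin m) ι ℚ}
    (hM : ∀ a b, M a b = 0 ∨ M a b = 1) (a a' : Fin m) :
    (({b | {a, a'} ⊆ colBlock M b} : Finset ι).card : ℚ) = (M * Mᵀ) a a' := by
  rw [card_filter, Matrix.mul_apply]; push_cast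
  refine sum_congr rfl fun b _ => ?_
  simp only [colBlock, insert_subset_iff, singleton_subset_iff, mem_filter, mem_univ, true_and,
    Matrix.transpose_apply]
  rcases hM a b with h | h <;> rcases hM a' b with h' | h' <;> simp [h, h']

lemma colBlock_injective {M : Matrix (Fin m) ι ℚ} (hM : ∀ a b, M a b = 0 ∨ M a b = 1)
    (hinj : Injective Mᵀ) : Injective (colBlock M) := by
  refine fun b b' hbb => hinj <| funext fun a => ?_
  have hmem : a ∈ colBlock M b ↔ a ∈ colBlock M b' := by rw [hbb]
  simp only [colBlock, mem_filter, mem_univ, true_and] at hmem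
  rcases hM a b with h | h <;> rcases hM a b' with h' | h' <;> simp_all

theorem isBlockDesign_image_colBlock [Fintype ι] [DecidableEq ι] {M : Matrix (Fin m) ι ℚ}
    (hM : ∀ a b, M a b = 0 ∨ M a b = 1) (hinj : Injective Mᵀ) {l lam : ℕ}
    (hcol : ∀ b, ∑ a, M a b = l) (hgram : ∀ a a', a ≠ a' → (M * Mᵀ) a a' = lam) :
    IsBlockDesign 2 l lam (univ.image (colBlock M)) := by
  refine ⟨fun J hJ => ?_, fun T hT => ?_⟩
  · obtain ⟨b, -, rfl⟩ := mem_image.1 hJ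
    exact_mod_cast (card_colBlock hM b).trans (hcol b)
  · obtain ⟨a, a', hne, rfl⟩ := card_eq_two.1 hT
    rw [filter_image, card_image_of_injective _ (colBlock_injective hM hinj)]
    exact_mod_cast (card_filter_pair_subset_colBlock hM a a').trans (hgram a a' hne)

end Incidence

lemma S_eq_zero_or_one (r : ℕ) (a : Fin (2 ^ r)) (b : Fin (2 ^ (r + 1) - 2)) :
    S r a b = 0 ∨ S r a b = 1 :=
  Sfun_eq_zero_or_one r a b

lemma F_mul_apply {n : Type*} (r : ℕ) (M : Matrix (Fin (2 ^ (r + 1) - 2)) n ℚ)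
    (c : Fin (2 ^ (r + 1) - 2)) (j : n) :
    (F r * M) c j = M ⟨pairFlip c, pairFlip_lt (even_two_pow_succ_sub_two r) c.2⟩ j := by
  rw [Matrix.mul_apply, sum_eq_single_of_mem
    ⟨pairFlip c, pairFlip_lt (even_two_pow_succ_sub_two r) c.2⟩ (mem_univ _)]
  · simp [F, pairFlip_involutive c]
  · intro b _ hb
    simp only [F, Matrix.of_apply, ite_mul, one_mul, zero_mul, ite_eq_right_iff]
    intro hcb
    exact absurd (Fin.ext (by simp [hcb, pairFlip_involutive b])) hb

lemma blocks_eq_image_colBlock (r : ℕ) : blocks r = univ.image (colBlock (S r)) := rfl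

lemma S_mul_transpose_apply (r : ℕ) (a a' : Fin (2 ^ r)) :
    (S r * (S r)ᵀ) a a' = twistedRowDot r 0 a a' := by
  rw [Matrix.mul_apply, twistedRowDot,
    ← Fin.sum_univ_eq_sum_range fun b => Sfun r a b * Sfun r a' (pairFlip^[0] b)]
  rfl

lemma S_mul_F_mul_transpose_apply (r : ℕ) (a a' : Fin (2 ^ r)) :
    (S r * F r * (S r)ᵀ) a a' = twistedRowDot r 1 a a' := by
  rw [Matrix.mul_assoc, Matrix.mul_apply, twistedRowDot,
    ← Fin.sum_univ_eq_sum_range fun b => Sfun r a b * Sfun r a' (pairFlip^[1] b)]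
  simp only [F_mul_apply]
  rfl

theorem S_mul_transpose (r : ℕ) :
    S (r + 1) * (S (r + 1))ᵀ =
      ((2 : ℚ) ^ r) • (1 : Matrix (Fin (2 ^ (r + 1))) (Fin (2 ^ (r + 1))) ℚ) +
        ((2 : ℚ) ^ r - 1) • Matrix.of (fun _ _ => (1 : ℚ)) := by
  ext a a'
  rw [S_mul_transpose_apply, twistedRowDot_eq r 0 a.2 a'.2]
  by_cases h : a = a' <;> simp [h, Fin.val_eq_val, pow_succ]; ring

theorem S_mul_F_mul_transpose (r : ℕ) :
    S (r + 1) * F (r + 1) * (S (r + 1))ᵀ =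
      ((2 : ℚ) ^ r) •
        (Matrix.of (fun _ _ => (1 : ℚ)) -
          (1 : Matrix (Fin (2 ^ (r + 1))) (Fin (2 ^ (r + 1))) ℚ)) := by
  ext a a'
  rw [S_mul_F_mul_transpose_apply, twistedRowDot_eq r 1 a.2 a'.2]
  by_cases h : a = a' <;> simp [h, Fin.val_eq_val]

lemma sum_S_col (r : ℕ) (b : Fin (2 ^ (r + 2) - 2)) : ∑ a, S (r + 1) a b = 2 ^ r :=
  (Fin.sum_univ_eq_sum_range (fun a => Sfun (r + 1) a b) _).trans (sum_Sfun_col r b.2)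

lemma S_transpose_injective (r : ℕ) : Injective (S (r + 1))ᵀ :=
  fun b b' h => Fin.ext <| eq_of_Sfun_col_eq r b.2 b'.2 fun a ha => congrFun h ⟨a, ha⟩

theorem stmt18 (r : ℕ) (hr : 1 ≤ r) :
    -- `S_r S_rᵀ = 2^(r-1) I + (2^(r-1) - 1) J`
    S r * (S r)ᵀ =
      ((2 : ℚ) ^ (r - 1)) • (1 : Matrix (Fin (2 ^ r)) (Fin (2 ^ r)) ℚ) +
        ((2 : ℚ) ^ (r - 1) - 1) • Matrix.of (fun _ _ => (1 : ℚ)) ∧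
    -- `S_r F_r S_rᵀ = 2^(r-1) (J - I)`
    S r * F r * (S r)ᵀ =
      ((2 : ℚ) ^ (r - 1)) •
        (Matrix.of (fun _ _ => (1 : ℚ)) - (1 : Matrix (Fin (2 ^ r)) (Fin (2 ^ r)) ℚ)) ∧
    -- consequently the columns of `S_r` are the incidence vectors of a collection of
    -- `2(m-1)` subsets of `{1,…,m}`, `m = 2^r`, each of size `m/2`,
    (blocks r).card = 2 * (2 ^ r - 1) ∧
    -- forming a `2`-`(m, m/2, m/2 - 1)` block design
    IsBlockDesign 2 (2 ^ (r - 1)) (2 ^ (r - 1) - 1) (blocks r) := by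
  obtain ⟨s, rfl⟩ := Nat.exists_eq_add_of_le' hr
  rw [Nat.add_sub_cancel]
  have hinj := colBlock_injective (S_eq_zero_or_one _) (S_transpose_injective s)
  refine ⟨S_mul_transpose s, S_mul_F_mul_transpose s, ?_, ?_⟩
  · rw [blocks_eq_image_colBlock, card_image_of_injective _ hinj, card_univ, Fintype.card_fin,
      pow_succ, pow_succ]
    omega
  · rw [blocks_eq_image_colBlock]
    refine isBlockDesign_image_colBlock (S_eq_zero_or_one _) (S_transpose_injective s)
      (fun b => by exact_mod_cast sum_S_col s b) fun a a' h => ?_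
    rw [S_mul_transpose, Nat.cast_sub Nat.one_le_two_pow]
    simp [h]

end
end
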